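/- Let H = [[h₁,h₃],[h₃,h₂]] be a Hamiltonian on (0,∞) with m_j(t) = ∫₀ᵗ h_j(s) ds, and assume m₁(t), m₂(t) > 0 for all t > 0. Suppose m₁ is regularly varying at 0 with index ρ₁ ∈ (0,∞), m₂ is regularly varying at 0 with index ρ₂ ∈ (0,∞), and the limit δ := lim_{t→0⁺} m₃(t)/√(m₁(t)m₂(t)) exists in ℝ; set ρ₃ = (ρ₁+ρ₂)/2. Let t̂ : (0,∞) → (0,∞) be a function with (m₁m₂)(t̂(r)) = 1/r² for all r > 0 and t̂(r) → 0 as r → ∞, and define b₁(r) = r·√(t̂(r)·m₂(t̂(r))) and b₂(r) = r·√(t̂(r)·m₁(t̂(r))). Define H̃(t) = [[ρ₁ t^{ρ₁−1}, δρ₃ t^{ρ₃−1}],[δρ₃ t^{ρ₃−1}, ρ₂ t^{ρ₂−1}]] for t > 0. Then H̃(t) is positive semidefinite for a.e. t > 0 (so H̃ is a Hamiltonian), and ∫₀ˣ (A_r^{b₁(r),b₂(r)} H)(s) ds → ∫₀ˣ H̃(s) ds as r → ∞, locally uniformly for x ∈ (0,∞); equivalently, for every x > 0: m₁(t̂(r)x)/m₁(t̂(r))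 → x^{ρ₁}, m₂(t̂(r)x)/m₂(t̂(r)) → x^{ρ₂}, and m₃(t̂(r)x)/√(m₁(t̂(r))m₂(t̂(r))) → δ·x^{ρ₃} as r → ∞. -/

import Mathlib

open MeasureTheory Filter Set Topology Real

noncomputable section

/-- A Hamiltonian on `(0,∞)`: a measurable, locally integrable, a.e. symmetric positive
semidefinite `2×2`-matrix-valued function with a.e. positive trace, whose trace is not
integrable at `∞` (i.e. `∫₀^∞ tr H = ∞`). -/
def IsHamiltonian (H : ℝ → Matrix (Fin 2) (Fin 2) ℝ) : Prop :=
  (∀ i j : Fin 2, Measurable fun t => H t i j) ∧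
  (∀ x > (0:ℝ), ∀ i j : Fin 2, IntegrableOn (fun t => H t i j) (Ioc 0 x)) ∧
  (∀ᵐ t : ℝ, 0 < t → (H t).PosSemidef ∧ 0 < (H t).trace) ∧
  ¬ IntegrableOn (fun t => (H t).trace) (Ioi 0)

/-- `f : (0,∞) → (0,∞)` is regularly varying at `0` with index `ρ`. -/
def RegVaryAt0 (f : ℝ → ℝ) (ρ : ℝ) : Prop :=
  ∀ l : ℝ, 0 < l →
    Tendsto (fun t => f (l * t) / f t) (𝓝[>] (0:ℝ)) (𝓝 (l ^ ρ))

/-!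
With `T = t̂(r)`, the rescaled primitives are the ratios `m₁(Tx)/m₁(T)`, `m₂(Tx)/m₂(T)` and
`m₃(Tx)/√(m₁(T)m₂(T))`, whose pointwise limits `x^ρ₁`, `x^ρ₂`, `δ x^ρ₃` come from regular
variation. The first two are monotone in `x` with continuous limits, hence converge locally
uniformly (Pólya). Positive semidefiniteness of `H` gives the Cauchy–Schwarz bound
`(Δm₃)² ≤ Δm₁ Δm₂` on increments, which transfers the local uniformity to the third ratio;
passed to the limit and divided by `(x - 1)²` as `x → 1`, it also gives `(δρ₃)² ≤ ρ₁ρ₂`,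
i.e. `H̃ ≥ 0`.
-/

theorem Matrix.posSemidef_of_fin_two {a b c : ℝ} (ha : 0 ≤ a) (hc : 0 ≤ c) (hb : b ^ 2 ≤ a * c) :
    (!![a, b; b, c]).PosSemidef := by
  refine Matrix.posSemidef_iff_dotProduct_mulVec.mpr ⟨?_, fun x => ?_⟩
  · ext i j
    fin_cases i <;> fin_cases j <;> rfl
  · simp only [dotProduct, Pi.star_apply, star_trivial, Matrix.mulVec, Matrix.of_apply,
      Matrix.cons_val', Matrix.cons_val_fin_one, Fin.sum_univ_two, Fin.isValue,
      Matrix.cons_val_zero, Matrix.cons_val_one]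
    rcases ha.eq_or_lt with rfl | ha
    · obtain rfl : b = 0 := by nlinarith [sq_nonneg b]
      nlinarith [mul_nonneg hc (mul_self_nonneg (x 1))]
    · nlinarith [sq_nonneg (a * x 0 + b * x 1), mul_nonneg (sub_nonneg.2 hb) (sq_nonneg (x 1))]

theorem Matrix.PosSemidef.fin_two_quadratic_nonneg {M : Matrix (Fin 2) (Fin 2) ℝ}
    (hM : M.PosSemidef) (t : ℝ) : 0 ≤ M 0 0 * (t * t) + 2 * M 0 1 * t + M 1 1 := by
  have h := hM.dotProduct_mulVec_nonneg ![t, 1]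
  have hsym : M 1 0 = M 0 1 := by simpa using congrFun (congrFun hM.1 0) 1
  simp only [dotProduct, Pi.star_apply, star_trivial, Matrix.mulVec, Fin.sum_univ_two,
    Fin.isValue, Matrix.cons_val_zero, Matrix.cons_val_one, Matrix.cons_val_fin_one, mul_one,
    hsym, one_mul] at h
  linarith

theorem integral_offDiag_sq_le {α : Type*} [MeasurableSpace α] {μ : Measure α}
    {H : α → Matrix (Fin 2) (Fin 2) ℝ} (hint : ∀ i j, Integrable (fun t => H t i j) μ)
    (hpsd : ∀ᵐ t ∂μ, (H t).PosSemidef) :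
    (∫ t, H t 0 1 ∂μ) ^ 2 ≤ (∫ t, H t 0 0 ∂μ) * ∫ t, H t 1 1 ∂μ := by
  have hquad (x : ℝ) : 0 ≤ (∫ t, H t 0 0 ∂μ) * (x * x) + 2 * (∫ t, H t 0 1 ∂μ) * x
      + ∫ t, H t 1 1 ∂μ := by
    have h₀ := (hint 0 0).mul_const (x * x)
    have h₁ := ((hint 0 1).const_mul 2).mul_const x
    have h₀₁ : Integrable (fun t => H t 0 0 * (x * x) + 2 * H t 0 1 * x) μ := h₀.add h₁
    calc 0 ≤ ∫ t, (H t 0 0 * (x * x) + 2 * H t 0 1 * x + H t 1 1) ∂μ :=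
          integral_nonneg_of_ae (hpsd.mono fun t ht => ht.fin_two_quadratic_nonneg x)
      _ = _ := by
          rw [integral_add h₀₁ (hint 1 1), integral_add h₀ h₁, integral_mul_const,
            integral_mul_const, integral_const_mul]
  have := discrim_le_zero hquad
  rw [discrim] at this
  linarith

theorem integral_Ioc_zero_sub_integral_Ioc_zero {f : ℝ → ℝ} {a b : ℝ} (ha : 0 ≤ a)
    (hab : a ≤ b) (hf : IntegrableOn f (Ioc 0 b)) :
    (∫ s in Ioc 0 b, f s) - ∫ s in Ioc 0 a, f s = ∫ s in Ioc a b, f s := by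
  have h := setIntegral_union (Ioc_disjoint_Ioc_of_le le_rfl) measurableSet_Ioc
    (hf.mono_set (Ioc_subset_Ioc_right hab)) (hf.mono_set (Ioc_subset_Ioc_left ha))
  rw [Ioc_union_Ioc_eq_Ioc ha hab] at h
  rw [h, add_sub_cancel_left]

theorem integral_Ioc_zero_comp_mul_left (f : ℝ → ℝ) {T x : ℝ} (hT : 0 < T) (hx : 0 ≤ x) :
    ∫ s in Ioc 0 x, f (T * s) = T⁻¹ * ∫ s in Ioc 0 (T * x), f s := by
  rw [← intervalIntegral.integral_of_le hx,
    ← intervalIntegral.integral_of_le (mul_nonneg hT.le hx),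
    intervalIntegral.integral_comp_mul_left f hT.ne', mul_zero, smul_eq_mul]

theorem integral_Ioc_zero_mul_rpow_sub_one {ρ x : ℝ} (hρ : 0 < ρ) (hx : 0 ≤ x) :
    ∫ s in Ioc 0 x, ρ * s ^ (ρ - 1) = x ^ ρ := by
  rw [← intervalIntegral.integral_of_le hx, intervalIntegral.integral_const_mul,
    integral_rpow (Or.inl (by linarith)), sub_add_cancel, zero_rpow hρ.ne', sub_zero,
    mul_div_cancel₀ _ hρ.ne']

theorem tendsto_rpow_sub_one_div_sub_one (ρ : ℝ) :
    Tendsto (fun x : ℝ => (x ^ ρ - 1) / (x - 1)) (𝓝[≠] 1) (𝓝 ρ) := by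
  have h := hasDerivAt_iff_tendsto_slope.mp (hasDerivAt_rpow_const (p := ρ) (Or.inl one_ne_zero))
  simp only [one_rpow, mul_one] at h
  refine h.congr fun x => ?_
  simp [slope, div_eq_inv_mul]

theorem sq_mul_le_of_forall_rpow_sub_one {δ ρ₁ ρ₂ ρ₃ : ℝ}
    (h : ∀ x > 1, (δ * x ^ ρ₃ - δ) ^ 2 ≤ (x ^ ρ₁ - 1) * (x ^ ρ₂ - 1)) :
    (δ * ρ₃) ^ 2 ≤ ρ₁ * ρ₂ := by
  have hslope (ρ : ℝ) : Tendsto (fun x : ℝ => (x ^ ρ - 1) / (x - 1)) (𝓝[>] 1) (𝓝 ρ) :=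
    (tendsto_rpow_sub_one_div_sub_one ρ).mono_left (nhdsWithin_mono _ fun x hx => ne_of_gt hx)
  refine le_of_tendsto_of_tendsto ((tendsto_const_nhds.mul (hslope ρ₃)).pow 2)
    ((hslope ρ₁).mul (hslope ρ₂)) ?_
  filter_upwards [self_mem_nhdsWithin] with x (hx : 1 < x)
  have hx1 : 0 < (x - 1) ^ 2 := by nlinarith
  calc (δ * ((x ^ ρ₃ - 1) / (x - 1))) ^ 2 = (δ * x ^ ρ₃ - δ) ^ 2 / (x - 1) ^ 2 := by
        rw [mul_div_assoc', div_pow, mul_sub, mul_one]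
    _ ≤ (x ^ ρ₁ - 1) * (x ^ ρ₂ - 1) / (x - 1) ^ 2 := div_le_div_of_nonneg_right (h x hx) hx1.le
    _ = (x ^ ρ₁ - 1) / (x - 1) * ((x ^ ρ₂ - 1) / (x - 1)) := by rw [div_mul_div_comm, sq]

theorem sq_sub_div_sqrt_le {u v a₁ b₁ a₂ b₂ a₃ b₃ : ℝ} (hu : 0 < u) (hv : 0 < v)
    (h : (b₃ - a₃) ^ 2 ≤ (b₁ - a₁) * (b₂ - a₂)) :
    (b₃ / √(u * v) - a₃ / √(u * v)) ^ 2 ≤ (b₁ / u - a₁ / u) * (b₂ / v - a₂ / v) := by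
  rw [← sub_div, ← sub_div, ← sub_div, div_pow, sq_sqrt (by positivity), div_mul_div_comm]
  exact div_le_div_of_nonneg_right h (by positivity)

theorem tendstoLocallyUniformlyOn_of_forall_tendsto_prod {ι α β : Type*} [TopologicalSpace α]
    [UniformSpace β] {F : ι → α → β} {f : α → β} {p : Filter ι} {s : Set α}
    (hf : ContinuousOn f s)
    (h : ∀ x ∈ s, Tendsto (fun q : ι × α => F q.1 q.2) (p ×ˢ 𝓝[s] x) (𝓝 (f x))) :
    TendstoLocallyUniformlyOn F f p s := by
  refine tendstoLocallyUniformlyOn_iff_forall_tendsto.2 fun x hx => ?_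
  have hfx : Tendsto (fun q : ι × α => f q.2) (p ×ˢ 𝓝[s] x) (𝓝 (f x)) :=
    (hf x hx).tendsto.comp tendsto_snd
  exact (nhds_le_uniformity (f x)).trans' (by rw [nhds_prod_eq]; exact hfx.prodMk (h x hx))

section RegularVariation

variable {ι : Type*} {p : Filter ι}

theorem tendsto_prod_nhds_of_monotoneOn {F : ι → ℝ → ℝ} {G : ℝ → ℝ} {s : Set ℝ} {x : ℝ}
    (hs : s ∈ 𝓝 x) (hmono : ∀ᶠ i in p, MonotoneOn (F i) s) (hG : ContinuousAt G x)
    (hlim : ∀ y ∈ s, Tendsto (fun i => F i y) p (𝓝 (G y))) :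
    Tendsto (fun q : ι × ℝ => F q.1 q.2) (p ×ˢ 𝓝 x) (𝓝 (G x)) := by
  refine tendsto_order.2 ⟨fun a ha => ?_, fun a ha => ?_⟩
  · have hy : ∀ᶠ y in 𝓝[<] x, y ∈ s ∧ a < G y :=
      nhdsWithin_le_nhds (Filter.Eventually.and hs (hG.eventually (lt_mem_nhds ha)))
    obtain ⟨y, ⟨hys, hay⟩, hyx : y < x⟩ := (hy.and self_mem_nhdsWithin).exists
    have hi := ((hlim y hys).eventually (lt_mem_nhds hay)).and hmono
    have hw : ∀ᶠ w in 𝓝 x, y < w ∧ w ∈ s := Filter.Eventually.and (Ioi_mem_nhds hyx) hs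
    filter_upwards [hi.prod_mk hw] with ⟨i, w⟩ ⟨⟨hai, hmi⟩, hyw, hws⟩
    exact hai.trans_le (hmi hys hws hyw.le)
  · have hz : ∀ᶠ z in 𝓝[>] x, z ∈ s ∧ G z < a :=
      nhdsWithin_le_nhds (Filter.Eventually.and hs (hG.eventually (gt_mem_nhds ha)))
    obtain ⟨z, ⟨hzs, hza⟩, hxz : x < z⟩ := (hz.and self_mem_nhdsWithin).exists
    have hi := ((hlim z hzs).eventually (gt_mem_nhds hza)).and hmono
    have hw : ∀ᶠ w in 𝓝 x, w < z ∧ w ∈ s := Filter.Eventually.and (Iio_mem_nhds hxz) hs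
    filter_upwards [hi.prod_mk hw] with ⟨i, w⟩ ⟨⟨hai, hmi⟩, hwz, hws⟩
    exact (hmi hws hzs hwz.le).trans_lt hai

theorem tendsto_prod_nhds_of_sq_sub_le {F₁ F₂ F₃ : ι → ℝ → ℝ} {x a₁ a₂ a₃ : ℝ}
    (h₁ : Tendsto (fun q : ι × ℝ => F₁ q.1 q.2) (p ×ˢ 𝓝 x) (𝓝 a₁))
    (h₂ : Tendsto (fun q : ι × ℝ => F₂ q.1 q.2) (p ×ˢ 𝓝 x) (𝓝 a₂))
    (h₃ : Tendsto (fun i => F₃ i x) p (𝓝 a₃))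
    (hCS : ∀ᶠ q in p ×ˢ 𝓝 x, (F₃ q.1 q.2 - F₃ q.1 x) ^ 2 ≤
      (F₁ q.1 q.2 - F₁ q.1 x) * (F₂ q.1 q.2 - F₂ q.1 x)) :
    Tendsto (fun q : ι × ℝ => F₃ q.1 q.2) (p ×ˢ 𝓝 x) (𝓝 a₃) := by
  have hx : Tendsto (fun q : ι × ℝ => (q.1, x)) (p ×ˢ 𝓝 x) (p ×ˢ 𝓝 x) :=
    tendsto_fst.prodMk (tendsto_const_nhds (x := x))
  have hprod : Tendsto (fun q : ι × ℝ => (F₁ q.1 q.2 - F₁ q.1 x) * (F₂ q.1 q.2 - F₂ q.1 x))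
      (p ×ˢ 𝓝 x) (𝓝 0) := by
    simpa using (h₁.sub (h₁.comp hx)).mul (h₂.sub (h₂.comp hx))
  have hsq : Tendsto (fun q : ι × ℝ => (F₃ q.1 q.2 - F₃ q.1 x) ^ 2) (p ×ˢ 𝓝 x) (𝓝 0) :=
    squeeze_zero' (.of_forall fun _ => sq_nonneg _) hCS hprod
  have hdiff : Tendsto (fun q : ι × ℝ => F₃ q.1 q.2 - F₃ q.1 x) (p ×ˢ 𝓝 x) (𝓝 0) := by
    rw [tendsto_zero_iff_abs_tendsto_zero]
    simpa [Function.comp_def, sqrt_sq_eq_abs] using hsq.sqrt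
  simpa using hdiff.add (h₃.comp tendsto_fst)

variable {T : ι → ℝ} {m₁ m₂ m₃ : ℝ → ℝ} {ρ₁ ρ₂ δ x : ℝ}

theorem RegVaryAt0.tendsto_comp {m : ℝ → ℝ} {ρ : ℝ} (hm : RegVaryAt0 m ρ)
    (hT : Tendsto T p (𝓝[>] 0)) (hx : 0 < x) :
    Tendsto (fun i => m (T i * x) / m (T i)) p (𝓝 (x ^ ρ)) :=
  ((hm x hx).comp hT).congr fun i => by simp [mul_comm]

theorem tendsto_div_sqrt_of_regVaryAt0 (hpos₁ : ∀ t > 0, 0 < m₁ t) (hpos₂ : ∀ t > 0, 0 < m₂ t)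
    (hrv₁ : RegVaryAt0 m₁ ρ₁) (hrv₂ : RegVaryAt0 m₂ ρ₂)
    (hδ : Tendsto (fun t => m₃ t / √(m₁ t * m₂ t)) (𝓝[>] 0) (𝓝 δ))
    (hT : Tendsto T p (𝓝[>] 0)) (hx : 0 < x) :
    Tendsto (fun i => m₃ (T i * x) / √(m₁ (T i) * m₂ (T i))) p
      (𝓝 (δ * x ^ ((ρ₁ + ρ₂) / 2))) := by
  have hTx : Tendsto (fun i => T i * x) p (𝓝[>] 0) := by
    obtain ⟨hT0, hTpos⟩ := tendsto_nhdsWithin_iff.1 hT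
    exact tendsto_nhdsWithin_iff.2
      ⟨by simpa using hT0.mul_const x, hTpos.mono fun i hi => mul_pos hi hx⟩
  have hlim := (hδ.comp hTx).mul ((hrv₁.tendsto_comp hT hx).mul (hrv₂.tendsto_comp hT hx)).sqrt
  rw [← rpow_add hx, sqrt_eq_rpow, ← rpow_mul hx.le, add_mul, one_div, ← div_eq_mul_inv,
    ← div_eq_mul_inv, ← add_div] at hlim
  refine hlim.congr' ?_
  filter_upwards [hT self_mem_nhdsWithin] with i (hi : 0 < T i)
  have hix : 0 < T i * x := mul_pos hi hx
  have := hpos₁ _ hi; have := hpos₂ _ hi; have := hpos₁ _ hix; have := hpos₂ _ hix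
  rw [Function.comp_apply, div_mul_div_comm, sqrt_div (by positivity), div_mul_div_cancel₀
    (by positivity)]

theorem RegVaryAt0.tendsto_prod_nhds {m : ℝ → ℝ} {ρ : ℝ} (hm : RegVaryAt0 m ρ)
    (hpos : ∀ t > 0, 0 < m t) (hmono : MonotoneOn m (Ioi 0)) (hT : Tendsto T p (𝓝[>] 0))
    (hx : 0 < x) :
    Tendsto (fun q : ι × ℝ => m (T q.1 * q.2) / m (T q.1)) (p ×ˢ 𝓝 x) (𝓝 (x ^ ρ)) := by
  refine tendsto_prod_nhds_of_monotoneOn (Ioi_mem_nhds hx) ?_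
    (continuousAt_rpow_const _ _ (Or.inl hx.ne')) fun y hy => hm.tendsto_comp hT hy
  filter_upwards [hT self_mem_nhdsWithin] with i (hi : 0 < T i) a ha b hb hab
  exact div_le_div_of_nonneg_right (hmono (mul_pos hi ha) (mul_pos hi hb)
    (mul_le_mul_of_nonneg_left hab hi.le)) (hpos _ hi).le

theorem sq_mul_le_of_regVaryAt0
    (hpos₁ : ∀ t > 0, 0 < m₁ t) (hpos₂ : ∀ t > 0, 0 < m₂ t)
    (hCS : ∀ a > 0, ∀ b > 0, (m₃ b - m₃ a) ^ 2 ≤ (m₁ b - m₁ a) * (m₂ b - m₂ a))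
    (hrv₁ : RegVaryAt0 m₁ ρ₁) (hrv₂ : RegVaryAt0 m₂ ρ₂)
    (hδ : Tendsto (fun t => m₃ t / √(m₁ t * m₂ t)) (𝓝[>] 0) (𝓝 δ)) :
    (δ * ((ρ₁ + ρ₂) / 2)) ^ 2 ≤ ρ₁ * ρ₂ := by
  refine sq_mul_le_of_forall_rpow_sub_one fun x hx => ?_
  have hx0 : 0 < x := one_pos.trans hx
  have lim₃ {y : ℝ} (hy : 0 < y) :=
    tendsto_div_sqrt_of_regVaryAt0 hpos₁ hpos₂ hrv₁ hrv₂ hδ tendsto_id hy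
  have key := le_of_tendsto_of_tendsto (((lim₃ hx0).sub (lim₃ one_pos)).pow 2)
    (((hrv₁.tendsto_comp tendsto_id hx0).sub (hrv₁.tendsto_comp tendsto_id one_pos)).mul
      ((hrv₂.tendsto_comp tendsto_id hx0).sub (hrv₂.tendsto_comp tendsto_id one_pos)))
    (eventually_nhdsWithin_of_forall fun t (ht : 0 < t) => sq_sub_div_sqrt_le (hpos₁ t ht)
      (hpos₂ t ht) (hCS _ (mul_pos ht one_pos) _ (mul_pos ht hx0)))
  simpa only [one_rpow, mul_one] using key

theorem tendstoLocallyUniformlyOn_ratios_of_regVaryAt0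
    (hpos₁ : ∀ t > 0, 0 < m₁ t) (hpos₂ : ∀ t > 0, 0 < m₂ t)
    (hCS : ∀ a > 0, ∀ b > 0, (m₃ b - m₃ a) ^ 2 ≤ (m₁ b - m₁ a) * (m₂ b - m₂ a))
    (hrv₁ : RegVaryAt0 m₁ ρ₁) (hrv₂ : RegVaryAt0 m₂ ρ₂)
    (hδ : Tendsto (fun t => m₃ t / √(m₁ t * m₂ t)) (𝓝[>] 0) (𝓝 δ))
    (hmono₁ : MonotoneOn m₁ (Ioi 0)) (hmono₂ : MonotoneOn m₂ (Ioi 0)) (hT : Tendsto T p (𝓝[>] 0)) :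
    TendstoLocallyUniformlyOn (fun i x => m₁ (T i * x) / m₁ (T i)) (fun x => x ^ ρ₁) p (Ioi 0) ∧
    TendstoLocallyUniformlyOn (fun i x => m₂ (T i * x) / m₂ (T i)) (fun x => x ^ ρ₂) p (Ioi 0) ∧
    TendstoLocallyUniformlyOn (fun i x => m₃ (T i * x) / √(m₁ (T i) * m₂ (T i)))
      (fun x => δ * x ^ ((ρ₁ + ρ₂) / 2)) p (Ioi 0) := by
  have hcont (ρ : ℝ) : ContinuousOn (fun x : ℝ => x ^ ρ) (Ioi 0) :=
    continuousOn_id.rpow_const fun x hx => Or.inl (ne_of_gt hx)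
  have htlu {F : ι → ℝ → ℝ} {f : ℝ → ℝ} (hf : ContinuousOn f (Ioi 0))
      (h : ∀ x > 0, Tendsto (fun q : ι × ℝ => F q.1 q.2) (p ×ˢ 𝓝 x) (𝓝 (f x))) :
      TendstoLocallyUniformlyOn F f p (Ioi 0) :=
    tendstoLocallyUniformlyOn_of_forall_tendsto_prod hf fun x hx =>
      (h x hx).mono_left (prod_mono le_rfl nhdsWithin_le_nhds)
  refine ⟨htlu (hcont ρ₁) fun x hx => hrv₁.tendsto_prod_nhds hpos₁ hmono₁ hT hx,
    htlu (hcont ρ₂) fun x hx => hrv₂.tendsto_prod_nhds hpos₂ hmono₂ hT hx,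
    htlu (continuousOn_const.mul (hcont _)) fun x hx => ?_⟩
  refine tendsto_prod_nhds_of_sq_sub_le (F₁ := fun i x => m₁ (T i * x) / m₁ (T i))
    (F₂ := fun i x => m₂ (T i * x) / m₂ (T i))
    (F₃ := fun i x => m₃ (T i * x) / √(m₁ (T i) * m₂ (T i)))
    (hrv₁.tendsto_prod_nhds hpos₁ hmono₁ hT hx) (hrv₂.tendsto_prod_nhds hpos₂ hmono₂ hT hx)
    (tendsto_div_sqrt_of_regVaryAt0 hpos₁ hpos₂ hrv₁ hrv₂ hδ hT hx) ?_
  have hTpos : ∀ᶠ i in p, 0 < T i := hT self_mem_nhdsWithin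
  filter_upwards [hTpos.prod_mk (Ioi_mem_nhds hx)] with ⟨i, w⟩ ⟨hi, hw⟩
  exact sq_sub_div_sqrt_le (hpos₁ _ hi) (hpos₂ _ hi) (hCS _ (mul_pos hi hx) _ (mul_pos hi hw))

end RegularVariation

section Hamiltonian

variable {H : ℝ → Matrix (Fin 2) (Fin 2) ℝ}

theorem monotoneOn_integral_Ioc_diag
    (hint : ∀ x > (0:ℝ), ∀ i j : Fin 2, IntegrableOn (fun t => H t i j) (Ioc 0 x))
    (hpsd : ∀ᵐ t : ℝ, 0 < t → (H t).PosSemidef) (i : Fin 2) :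
    MonotoneOn (fun t => ∫ s in Ioc 0 t, H s i i) (Ioi 0) := by
  intro a (ha : 0 < a) b hb hab
  rw [← sub_nonneg, integral_Ioc_zero_sub_integral_Ioc_zero ha.le hab (hint b hb i i)]
  exact integral_nonneg_of_ae <| (ae_restrict_iff' measurableSet_Ioc).2 <|
    hpsd.mono fun t ht hmem => (ht (ha.trans hmem.1)).diag_nonneg

theorem sq_integral_Ioc_offDiag_sub_le
    (hint : ∀ x > (0:ℝ), ∀ i j : Fin 2, IntegrableOn (fun t => H t i j) (Ioc 0 x))
    (hpsd : ∀ᵐ t : ℝ, 0 < t → (H t).PosSemidef) {a b : ℝ} (ha : 0 < a) (hb : 0 < b) :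
    ((∫ s in Ioc 0 b, H s 0 1) - ∫ s in Ioc 0 a, H s 0 1) ^ 2 ≤
      ((∫ s in Ioc 0 b, H s 0 0) - ∫ s in Ioc 0 a, H s 0 0) *
        ((∫ s in Ioc 0 b, H s 1 1) - ∫ s in Ioc 0 a, H s 1 1) := by
  wlog hab : a ≤ b generalizing a b
  · convert this hb ha (le_of_not_ge hab) using 1 <;> ring
  simp only [integral_Ioc_zero_sub_integral_Ioc_zero ha.le hab (hint b hb _ _)]
  exact integral_offDiag_sq_le (fun i j => (hint b hb i j).mono_set (Ioc_subset_Ioc_left ha.le))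
    ((ae_restrict_iff' measurableSet_Ioc).2 (hpsd.mono fun t ht hmem => ht (ha.trans hmem.1)))

theorem integral_Ioc_zero_rescaled_eq {m₁ m₂ m₃ : ℝ → ℝ}
    (hm₁ : ∀ t, m₁ t = ∫ s in Ioc (0:ℝ) t, H s 0 0)
    (hm₂ : ∀ t, m₂ t = ∫ s in Ioc (0:ℝ) t, H s 1 1)
    (hm₃ : ∀ t, m₃ t = ∫ s in Ioc (0:ℝ) t, H s 0 1)
    {r T b₁ b₂ x : ℝ} (hr : 0 < r) (hT : 0 < T) (h₁ : 0 < m₁ T) (h₂ : 0 < m₂ T)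
    (hprod : m₁ T * m₂ T = 1 / r ^ 2)
    (hb₁ : b₁ = r * √(T * m₂ T)) (hb₂ : b₂ = r * √(T * m₁ T)) (hx : 0 ≤ x) :
    ∫ s in Ioc 0 x, b₁ ^ 2 * H (b₁ * b₂ * s / r) 0 0 = m₁ (T * x) / m₁ T ∧
    ∫ s in Ioc 0 x, b₂ ^ 2 * H (b₁ * b₂ * s / r) 1 1 = m₂ (T * x) / m₂ T ∧
    ∫ s in Ioc 0 x, b₁ * b₂ * H (b₁ * b₂ * s / r) 0 1 = m₃ (T * x) / √(m₁ T * m₂ T) := by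
  have hsqrt : √(m₁ T * m₂ T) = r⁻¹ := by
    rw [hprod, one_div, ← inv_pow, sqrt_sq (by positivity)]
  have hb₁b₂ : b₁ * b₂ = r * T := by
    rw [hb₁, hb₂, mul_mul_mul_comm, ← sqrt_mul (by positivity),
      show T * m₂ T * (T * m₁ T) = T ^ 2 * (m₁ T * m₂ T) by ring, sqrt_mul (sq_nonneg T),
      sqrt_sq hT.le, hsqrt]
    field_simp
  have hrescale (c : ℝ) (i j : Fin 2) :
      ∫ s in Ioc 0 x, c * H (b₁ * b₂ * s / r) i j = c / T * ∫ s in Ioc 0 (T * x), H s i j := by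
    simp_rw [hb₁b₂, mul_assoc, mul_div_cancel_left₀ _ hr.ne', integral_const_mul,
      integral_Ioc_zero_comp_mul_left (fun t => H t i j) hT hx, div_eq_mul_inv, mul_assoc]
  have hr2 : r ^ 2 = (m₁ T * m₂ T)⁻¹ := by rw [hprod, one_div, inv_inv]
  refine ⟨?_, ?_, ?_⟩
  · rw [hrescale, ← hm₁, hb₁, mul_pow, sq_sqrt (by positivity), hr2]
    field_simp
  · rw [hrescale, ← hm₂, hb₂, mul_pow, sq_sqrt (by positivity), hr2]
    field_simp
  · rw [hrescale, ← hm₃, hb₁b₂, hsqrt]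
    field_simp

theorem posSemidef_rpow_fin_two {ρ₁ ρ₂ κ t : ℝ} (hρ₁ : 0 ≤ ρ₁) (hρ₂ : 0 ≤ ρ₂)
    (hκ : κ ^ 2 ≤ ρ₁ * ρ₂) (ht : 0 < t) :
    (!![ρ₁ * t ^ (ρ₁ - 1), κ * t ^ ((ρ₁ + ρ₂) / 2 - 1);
      κ * t ^ ((ρ₁ + ρ₂) / 2 - 1), ρ₂ * t ^ (ρ₂ - 1)]).PosSemidef := by
  refine Matrix.posSemidef_of_fin_two (by positivity) (by positivity) ?_
  have hpow : (t ^ ((ρ₁ + ρ₂) / 2 - 1)) ^ 2 = t ^ (ρ₁ - 1) * t ^ (ρ₂ - 1) := by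
    rw [← rpow_natCast, ← rpow_mul ht.le, ← rpow_add ht]
    ring_nf
  calc (κ * t ^ ((ρ₁ + ρ₂) / 2 - 1)) ^ 2 = κ ^ 2 * (t ^ (ρ₁ - 1) * t ^ (ρ₂ - 1)) := by
        rw [mul_pow, hpow]
    _ ≤ ρ₁ * ρ₂ * (t ^ (ρ₁ - 1) * t ^ (ρ₂ - 1)) := by gcongr
    _ = ρ₁ * t ^ (ρ₁ - 1) * (ρ₂ * t ^ (ρ₂ - 1)) := by ring

end Hamiltonian

theorem stmt19 (H : ℝ → Matrix (Fin 2) (Fin 2) ℝ) (hH : IsHamiltonian H)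
    (m₁ m₂ m₃ : ℝ → ℝ)
    (hm₁ : ∀ t, m₁ t = ∫ s in Ioc (0:ℝ) t, H s 0 0)
    (hm₂ : ∀ t, m₂ t = ∫ s in Ioc (0:ℝ) t, H s 1 1)
    (hm₃ : ∀ t, m₃ t = ∫ s in Ioc (0:ℝ) t, H s 0 1)
    (hm₁pos : ∀ t > (0:ℝ), 0 < m₁ t) (hm₂pos : ∀ t > (0:ℝ), 0 < m₂ t)
    (ρ₁ ρ₂ : ℝ) (hρ₁ : 0 < ρ₁) (hρ₂ : 0 < ρ₂)
    (hrv₁ : RegVaryAt0 m₁ ρ₁) (hrv₂ : RegVaryAt0 m₂ ρ₂)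
    (δ : ℝ)
    (hδ : Tendsto (fun t => m₃ t / Real.sqrt (m₁ t * m₂ t)) (𝓝[>] (0:ℝ)) (𝓝 δ))
    (ρ₃ : ℝ) (hρ₃ : ρ₃ = (ρ₁ + ρ₂) / 2)
    (that : ℝ → ℝ)
    (hthatpos : ∀ r > (0:ℝ), 0 < that r)
    (hthat : ∀ r > (0:ℝ), m₁ (that r) * m₂ (that r) = 1 / r ^ 2)
    (hthat0 : Tendsto that atTop (𝓝 0))
    (b₁ b₂ : ℝ → ℝ)
    (hb₁ : ∀ r, b₁ r = r * Real.sqrt (that r * m₂ (that r)))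
    (hb₂ : ∀ r, b₂ r = r * Real.sqrt (that r * m₁ (that r)))
    (Htilde : ℝ → Matrix (Fin 2) (Fin 2) ℝ)
    (hHtilde : ∀ t, Htilde t =
      !![ρ₁ * t ^ (ρ₁ - 1), δ * ρ₃ * t ^ (ρ₃ - 1);
         δ * ρ₃ * t ^ (ρ₃ - 1), ρ₂ * t ^ (ρ₂ - 1)]) :
    (∀ᵐ t : ℝ, 0 < t → (Htilde t).PosSemidef) ∧
    -- locally uniform convergence of the rescaled primitives, entrywise
    (TendstoLocallyUniformlyOn
        (fun (r : ℝ) (x : ℝ) => ∫ s in Ioc (0:ℝ) x, b₁ r ^ 2 * H (b₁ r * b₂ r * s / r) 0 0)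
        (fun x => ∫ s in Ioc (0:ℝ) x, Htilde s 0 0) atTop (Ioi 0) ∧
      TendstoLocallyUniformlyOn
        (fun (r : ℝ) (x : ℝ) => ∫ s in Ioc (0:ℝ) x, b₂ r ^ 2 * H (b₁ r * b₂ r * s / r) 1 1)
        (fun x => ∫ s in Ioc (0:ℝ) x, Htilde s 1 1) atTop (Ioi 0) ∧
      TendstoLocallyUniformlyOn
        (fun (r : ℝ) (x : ℝ) => ∫ s in Ioc (0:ℝ) x, b₁ r * b₂ r * H (b₁ r * b₂ r * s / r) 0 1)
        (fun x => ∫ s in Ioc (0:ℝ) x, Htilde s 0 1) atTop (Ioi 0)) ∧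
    -- equivalently, pointwise limits of the rescaled primitives
    (∀ x > (0:ℝ),
      Tendsto (fun r => m₁ (that r * x) / m₁ (that r)) atTop (𝓝 (x ^ ρ₁)) ∧
      Tendsto (fun r => m₂ (that r * x) / m₂ (that r)) atTop (𝓝 (x ^ ρ₂)) ∧
      Tendsto (fun r => m₃ (that r * x) / Real.sqrt (m₁ (that r) * m₂ (that r))) atTop
        (𝓝 (δ * x ^ ρ₃))) := by
  obtain ⟨-, hint, hpsd, -⟩ := hH
  replace hpsd : ∀ᵐ t : ℝ, 0 < t → (H t).PosSemidef := hpsd.mono fun t h ht => (h ht).1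
  have hmono₁ : MonotoneOn m₁ (Ioi 0) := by
    simpa only [← hm₁] using monotoneOn_integral_Ioc_diag hint hpsd 0
  have hmono₂ : MonotoneOn m₂ (Ioi 0) := by
    simpa only [← hm₂] using monotoneOn_integral_Ioc_diag hint hpsd 1
  have hCS : ∀ a > 0, ∀ b > 0, (m₃ b - m₃ a) ^ 2 ≤ (m₁ b - m₁ a) * (m₂ b - m₂ a) :=
    fun a ha b hb => by
      simpa only [← hm₁, ← hm₂, ← hm₃] using sq_integral_Ioc_offDiag_sub_le hint hpsd ha hb
  have hT : Tendsto that atTop (𝓝[>] 0) :=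
    tendsto_nhdsWithin_iff.2 ⟨hthat0, (eventually_gt_atTop 0).mono hthatpos⟩
  have hrescaled : ∀ᶠ r in atTop, ∀ x ∈ Ioi (0:ℝ), _ :=
    (eventually_gt_atTop 0).mono fun r hr x (hx : 0 < x) =>
      integral_Ioc_zero_rescaled_eq hm₁ hm₂ hm₃ hr (hthatpos r hr) (hm₁pos _ (hthatpos r hr))
        (hm₂pos _ (hthatpos r hr)) (hthat r hr) (hb₁ r) (hb₂ r) hx.le
  subst hρ₃
  obtain ⟨tlu₁, tlu₂, tlu₃⟩ := tendstoLocallyUniformlyOn_ratios_of_regVaryAt0 hm₁pos hm₂pos hCS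
    hrv₁ hrv₂ hδ hmono₁ hmono₂ hT
  refine ⟨ae_of_all _ fun t ht => hHtilde t ▸ posSemidef_rpow_fin_two hρ₁.le hρ₂.le
      (sq_mul_le_of_regVaryAt0 hm₁pos hm₂pos hCS hrv₁ hrv₂ hδ) ht, ⟨?_, ?_, ?_⟩,
    fun x hx => ⟨hrv₁.tendsto_comp hT hx, hrv₂.tendsto_comp hT hx,
      tendsto_div_sqrt_of_regVaryAt0 hm₁pos hm₂pos hrv₁ hrv₂ hδ hT hx⟩⟩
  · refine (tlu₁.congr_inseparable ?_).congr_right fun x (hx : 0 < x) => ?_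
    · exact hrescaled.mono fun r h x hx => .of_eq (h x hx).1.symm
    · simp [hHtilde, integral_Ioc_zero_mul_rpow_sub_one hρ₁ hx.le]
  · refine (tlu₂.congr_inseparable ?_).congr_right fun x (hx : 0 < x) => ?_
    · exact hrescaled.mono fun r h x hx => .of_eq (h x hx).2.1.symm
    · simp [hHtilde, integral_Ioc_zero_mul_rpow_sub_one hρ₂ hx.le]
  · refine (tlu₃.congr_inseparable ?_).congr_right fun x (hx : 0 < x) => ?_
    · exact hrescaled.mono fun r h x hx => .of_eq (h x hx).2.2.symm
    · simp [hHtilde, mul_assoc, integral_const_mul,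
        integral_Ioc_zero_mul_rpow_sub_one (by positivity : 0 < (ρ₁ + ρ₂) / 2) hx.le]
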